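/- arXiv:1612.01052 — 4 statements merged into one kernel-verified Lean document; each statement's English description precedes it below -/
import Mathlib

section
/- Let A be an operator algebra on a Hilbert space H, let J ⊆ A be a closed two-sided ideal admitting a bounded approximate identity (e_λ) with sup_λ ‖e_λ‖ = M, and let θ : J → B(K) be a non-degenerate bounded representation (i.e., the closed linear span of θ(J)K equals K). Then there exists a unique bounded representation θ̂ : A → B(K) extending θ, and it satisfies ‖θ̂‖ ≤ M‖θ‖. -/
noncomputable section

/-- The `n`-th amplification of a matrix of operators, acting on the Hilbert space
`ℓ²`-direct sum of `n` copies of `H`.  Its operator norm is the norm of the matrix in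
`M_n(B(H))`. -/
def amp {H : Type} [NormedAddCommGroup H] [InnerProductSpace ℂ H]
    (n : ℕ) (a : Matrix (Fin n) (Fin n) (H →L[ℂ] H)) :
    (PiLp 2 fun _ : Fin n => H) →L[ℂ] (PiLp 2 fun _ : Fin n => H) :=
  ((PiLp.continuousLinearEquiv 2 ℂ (fun _ : Fin n => H)).symm.toContinuousLinearMap) ∘L
    (ContinuousLinearMap.pi (fun i => ∑ j, (a i j) ∘L ContinuousLinearMap.proj j)) ∘L
    ((PiLp.continuousLinearEquiv 2 ℂ (fun _ : Fin n => H)).toContinuousLinearMap)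

variable {H K : Type} [NormedAddCommGroup H] [InnerProductSpace ℂ H]
  [NormedAddCommGroup K] [InnerProductSpace ℂ K]

/-- `A ⊆ B(H)` is an operator algebra: a norm-closed subalgebra. -/
def IsOpAlg (A : Set (H →L[ℂ] H)) : Prop :=
  IsClosed A ∧ (0 : H →L[ℂ] H) ∈ A ∧
  (∀ a ∈ A, ∀ b ∈ A, a + b ∈ A) ∧
  (∀ (c : ℂ), ∀ a ∈ A, c • a ∈ A) ∧
  (∀ a ∈ A, ∀ b ∈ A, a * b ∈ A)

/-- `J` is a closed two-sided ideal of `A`. -/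
def IsClosedIdealIn (J A : Set (H →L[ℂ] H)) : Prop :=
  J ⊆ A ∧ IsClosed J ∧ (0 : H →L[ℂ] H) ∈ J ∧
  (∀ a ∈ J, ∀ b ∈ J, a + b ∈ J) ∧
  (∀ (c : ℂ), ∀ a ∈ J, c • a ∈ J) ∧
  (∀ a ∈ A, ∀ j ∈ J, a * j ∈ J ∧ j * a ∈ J)

/-- `θ` is a (bounded) representation of `A` on the Hilbert space `K`:
linear, multiplicative and bounded on `A`. -/
def IsRepOn (A : Set (H →L[ℂ] H)) (θ : (H →L[ℂ] H) → (K →L[ℂ] K)) : Prop :=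
  (∀ a ∈ A, ∀ b ∈ A, θ (a + b) = θ a + θ b) ∧
  (∀ (c : ℂ), ∀ a ∈ A, θ (c • a) = c • θ a) ∧
  (∀ a ∈ A, ∀ b ∈ A, θ (a * b) = θ a * θ b) ∧
  (∃ C : ℝ, ∀ a ∈ A, ‖θ a‖ ≤ C * ‖a‖)

/-- All entries of the matrix `a` belong to `A`. -/
def MatEntriesIn (A : Set (H →L[ℂ] H)) {n : ℕ}
    (a : Matrix (Fin n) (Fin n) (H →L[ℂ] H)) : Prop :=
  ∀ i j, a i j ∈ A

/-- `‖θ⁽ⁿ⁾‖ ≤ C` on matrices with entries in `A`. -/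
def AmpBound (A : Set (H →L[ℂ] H)) (θ : (H →L[ℂ] H) → (K →L[ℂ] K))
    (n : ℕ) (C : ℝ) : Prop :=
  ∀ a : Matrix (Fin n) (Fin n) (H →L[ℂ] H), MatEntriesIn A a →
    ‖amp n (a.map θ)‖ ≤ C * ‖amp n a‖

/-- `θ` is completely bounded on `A`. -/
def CompletelyBoundedOn (A : Set (H →L[ℂ] H))
    (θ : (H →L[ℂ] H) → (K →L[ℂ] K)) : Prop :=
  ∃ C : ℝ, ∀ n : ℕ, AmpBound A θ n C

/-- `θ` is completely contractive on `A`. -/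
def CompletelyContractiveOn (A : Set (H →L[ℂ] H))
    (θ : (H →L[ℂ] H) → (K →L[ℂ] K)) : Prop :=
  ∀ n : ℕ, AmpBound A θ n 1

/-- `θ` is completely isometric on `A`. -/
def CompletelyIsometricOn (A : Set (H →L[ℂ] H))
    (θ : (H →L[ℂ] H) → (K →L[ℂ] K)) : Prop :=
  ∀ (n : ℕ) (a : Matrix (Fin n) (Fin n) (H →L[ℂ] H)), MatEntriesIn A a →
    ‖amp n (a.map θ)‖ = ‖amp n a‖

/-- The closure of the linear span of `{t ξ : t ∈ T, ξ ∈ V}`. -/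
def closSpanOrbit (T : Set (K →L[ℂ] K)) (V : Submodule ℂ K) : Submodule ℂ K :=
  (Submodule.span ℂ {x : K | ∃ t ∈ T, ∃ ξ ∈ V, x = t ξ}).topologicalClosure

/-- A set of operators acts non-degenerately. -/
def ActsNonDeg (T : Set (K →L[ℂ] K)) : Prop :=
  closSpanOrbit T ⊤ = ⊤

/-- `J` admits a bounded approximate identity with bound `M`. -/
def IsBAIFor (J : Set (H →L[ℂ] H)) (M : ℝ) : Prop :=
  ∃ (ι : Type) (inst : SemilatticeSup ι), Nonempty ι ∧
    ∃ e : ι → H →L[ℂ] H, (∀ i, e i ∈ J) ∧ (∀ i, ‖e i‖ ≤ M) ∧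
      ∀ a ∈ J,
        Filter.Tendsto (fun i => ‖a * e i - a‖)
          (@Filter.atTop ι inst.toPartialOrder.toPreorder) (nhds 0) ∧
        Filter.Tendsto (fun i => ‖e i * a - a‖)
          (@Filter.atTop ι inst.toPartialOrder.toPreorder) (nhds 0)

/-- The total reduction property: every closed invariant subspace of every representation
is the range of a bounded idempotent commuting with the image. -/
def HasTRP (A : Set (H →L[ℂ] H)) : Prop :=
  ∀ (K' : Type) [NormedAddCommGroup K'] [InnerProductSpace ℂ K'] [CompleteSpace K']
    (θ : (H →L[ℂ] H) → (K' →L[ℂ] K')), IsRepOn A θ →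
    ∀ M : Submodule ℂ K', IsClosed (M : Set K') →
      (∀ a ∈ A, ∀ ξ ∈ M, θ a ξ ∈ M) →
      ∃ E : K' →L[ℂ] K', E * E = E ∧ LinearMap.range (E : K' →ₗ[ℂ] K') = M ∧ ∀ a ∈ A, E * θ a = θ a * E

/-- The SP property: every bounded representation is completely bounded. -/
def HasSP (A : Set (H →L[ℂ] H)) : Prop :=
  ∀ (K' : Type) [NormedAddCommGroup K'] [InnerProductSpace ℂ K'] [CompleteSpace K']
    (θ : (H →L[ℂ] H) → (K' →L[ℂ] K')), IsRepOn A θ → CompletelyBoundedOn A θ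

/-- The quotient norm of `a` in `A/J`. -/
def qNorm (J : Set (H →L[ℂ] H)) (a : H →L[ℂ] H) : ℝ :=
  sInf {r : ℝ | ∃ j ∈ J, r = ‖a + j‖}

/-- The quotient norm of a matrix in `M_n(A/J)`. -/
def qAmpNorm (J : Set (H →L[ℂ] H)) (n : ℕ)
    (a : Matrix (Fin n) (Fin n) (H →L[ℂ] H)) : ℝ :=
  sInf {r : ℝ | ∃ b : Matrix (Fin n) (Fin n) (H →L[ℂ] H), MatEntriesIn J b ∧ r = ‖amp n (a + b)‖}

/-- The SP property for the quotient algebra `A/J`: every representation of `A` which kills `J`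
and is bounded for the quotient norm is completely bounded for the quotient operator space
structure. -/
def HasSPQuot (A J : Set (H →L[ℂ] H)) : Prop :=
  ∀ (K' : Type) [NormedAddCommGroup K'] [InnerProductSpace ℂ K'] [CompleteSpace K']
    (θ : (H →L[ℂ] H) → (K' →L[ℂ] K')), IsRepOn A θ → (∀ j ∈ J, θ j = 0) →
    (∃ C : ℝ, ∀ a ∈ A, ‖θ a‖ ≤ C * qNorm J a) →
    ∃ C : ℝ, ∀ (n : ℕ) (a : Matrix (Fin n) (Fin n) (H →L[ℂ] H)), MatEntriesIn A a →
      ‖amp n (a.map θ)‖ ≤ C * qAmpNorm J n a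

/-- The C*-algebra generated by `A` inside `B(H)`: the smallest closed star-subalgebra
containing `A`. -/
def CstarSet [CompleteSpace H] (A : Set (H →L[ℂ] H)) : Set (H →L[ℂ] H) :=
  ⋂₀ {S : Set (H →L[ℂ] H) | A ⊆ S ∧ IsClosed S ∧ (0 : H →L[ℂ] H) ∈ S ∧
    (∀ a ∈ S, ∀ b ∈ S, a + b ∈ S) ∧ (∀ (c : ℂ), ∀ a ∈ S, c • a ∈ S) ∧
    (∀ a ∈ S, ∀ b ∈ S, a * b ∈ S) ∧ (∀ a ∈ S, star a ∈ S)}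


/-! A bounded approximate identity `(eᵢ)` of `J` lets one define `θ̂ a` as the strong limit of
`θ (a eᵢ)`: on vectors `θ j ξ` this limit is `θ (a j) ξ`, non-degeneracy makes these vectors total,
and the uniform bound `‖θ (a eᵢ)‖ ≤ M C ‖a‖` carries convergence to all of `K`. Since an operator
is determined by its products with `θ j`, the identity `θ̂ a * θ j = θ (a j)` alone yields that
`θ̂` is a representation extending `θ`, and that it is the only one. -/

open Filter Topology

section StrongLimits

variable {ι 𝕜 E F : Type*} [SemilatticeSup ι] [NontriviallyNormedField 𝕜]
  [SeminormedAddCommGroup E] [NormedSpace 𝕜 E] [NormedAddCommGroup F] [NormedSpace 𝕜 F]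
  {T : ι → E →L[𝕜] F} {B : ℝ}

theorem ContinuousLinearMap.cauchySeq_apply_of_mem_span [Nonempty ι] {S : Set E}
    (hS : ∀ y ∈ S, CauchySeq fun i => T i y) {x : E} (hx : x ∈ Submodule.span 𝕜 S) :
    CauchySeq fun i => T i x := by
  induction hx using Submodule.span_induction with
  | mem y hy => exact hS y hy
  | zero => simpa using cauchySeq_const (0 : F)
  | add y z _ _ hy hz => simpa only [map_add, Pi.add_def] using hy.add hz
  | smul c y _ hy => simpa only [map_smul, Function.comp_def] using
      (uniformContinuous_const_smul c).comp_cauchySeq hy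

theorem ContinuousLinearMap.cauchySeq_apply_of_dense [Nonempty ι] (hT : ∀ i, ‖T i‖ ≤ B)
    {S : Set E} (hS : Dense S) (hTS : ∀ y ∈ S, CauchySeq fun i => T i y) (x : E) :
    CauchySeq fun i => T i x := by
  refine Metric.cauchySeq_iff'.2 fun ε hε => ?_
  have hB : 0 ≤ B := (norm_nonneg _).trans (hT (Classical.arbitrary ι))
  obtain ⟨y, hyS, hxy⟩ := hS.exists_dist_lt x (show 0 < ε / (3 * (B + 1)) by positivity)
  obtain ⟨N, hN⟩ := Metric.cauchySeq_iff'.1 (hTS y hyS) (ε / 3) (by positivity)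
  have hnear : ∀ i, dist (T i x) (T i y) < ε / 3 := fun i =>
    calc dist (T i x) (T i y) ≤ B * dist x y :=
          ((T i).dist_le_opNorm x y).trans (mul_le_mul_of_nonneg_right (hT i) dist_nonneg)
      _ ≤ (B + 1) * dist x y := by gcongr; linarith
      _ < (B + 1) * (ε / (3 * (B + 1))) := by gcongr
      _ = ε / 3 := by field_simp
  refine ⟨N, fun n hn => ?_⟩
  calc dist (T n x) (T N x) ≤ dist (T n x) (T n y) + dist (T n y) (T N y) + dist (T N y) (T N x) :=
        dist_triangle4 _ _ _ _
    _ < ε / 3 + ε / 3 + ε / 3 := by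
        gcongr
        · exact hnear n
        · exact hN n hn
        · rw [dist_comm]; exact hnear N
    _ = ε := by ring

theorem ContinuousLinearMap.exists_tendsto_apply_of_cauchySeq [Nonempty ι] [CompleteSpace F]
    (hT : ∀ i, ‖T i‖ ≤ B) (h : ∀ x, CauchySeq fun i => T i x) :
    ∃ T' : E →L[𝕜] F, (∀ x, Tendsto (fun i => T i x) atTop (𝓝 (T' x))) ∧ ‖T'‖ ≤ B := by
  choose f hf using fun x => cauchySeq_tendsto_of_complete (h x)
  have hbound : ∀ x, ‖f x‖ ≤ B * ‖x‖ := fun x =>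
    le_of_tendsto' (hf x).norm fun i => (T i).le_of_opNorm_le (hT i) x
  have hB : 0 ≤ B := (norm_nonneg _).trans (hT (Classical.arbitrary ι))
  let L : E →ₗ[𝕜] F := linearMapOfTendsto f (fun i => (T i : E →ₗ[𝕜] F)) (tendsto_pi_nhds.2 hf)
  exact ⟨L.mkContinuous B hbound, hf, L.mkContinuous_norm_le hB hbound⟩

end StrongLimits

theorem ActsNonDeg.ext {T : Set (K →L[ℂ] K)} (hT : ActsNonDeg T) {S R : K →L[ℂ] K}
    (h : ∀ t ∈ T, S * t = R * t) : S = R := by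
  refine ContinuousLinearMap.ext_on (Submodule.dense_iff_topologicalClosure_eq_top.2 hT) ?_
  rintro _ ⟨t, ht, ξ, -, rfl⟩
  exact congrArg (· ξ) (h t ht)

theorem IsRepOn.map_sub {J : Set (H →L[ℂ] H)} {θ : (H →L[ℂ] H) → (K →L[ℂ] K)}
    (hθ : IsRepOn J θ) (hsmul : ∀ (c : ℂ), ∀ a ∈ J, c • a ∈ J) {x y : H →L[ℂ] H}
    (hx : x ∈ J) (hy : y ∈ J) : θ (x - y) = θ x - θ y := by
  obtain ⟨hθadd, hθsmul, -⟩ := hθ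
  rw [sub_eq_add_neg, ← neg_one_smul ℂ y, hθadd x hx _ (hsmul (-1) y hy), hθsmul (-1) y hy,
    neg_one_smul, sub_eq_add_neg]

theorem IsRepOn.tendsto_of_tendsto {J : Set (H →L[ℂ] H)} {θ : (H →L[ℂ] H) → (K →L[ℂ] K)}
    (hθ : IsRepOn J θ) (hsmul : ∀ (c : ℂ), ∀ a ∈ J, c • a ∈ J)
    (hadd : ∀ a ∈ J, ∀ b ∈ J, a + b ∈ J) {C : ℝ} (hbd : ∀ j ∈ J, ‖θ j‖ ≤ C * ‖j‖)
    {ι : Type*} {l : Filter ι} {g : ι → H →L[ℂ] H} {x : H →L[ℂ] H} (hg : ∀ i, g i ∈ J)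
    (hx : x ∈ J) (hgx : Tendsto g l (𝓝 x)) : Tendsto (fun i => θ (g i)) l (𝓝 (θ x)) := by
  have hsub : ∀ a ∈ J, ∀ b ∈ J, a - b ∈ J := fun a ha b hb => by
    simpa [sub_eq_add_neg] using hadd a ha _ (hsmul (-1) b hb)
  rw [tendsto_iff_norm_sub_tendsto_zero] at hgx ⊢
  refine squeeze_zero (fun _ => norm_nonneg _) (fun i => ?_) (by simpa using hgx.const_mul C)
  rw [← hθ.map_sub hsmul (hg i) hx]
  exact hbd _ (hsub _ (hg i) _ hx)

theorem IsClosedIdealIn.exists_opNorm_le_mul_rep_eq [CompleteSpace K] {A J : Set (H →L[ℂ] H)}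
    (hJ : IsClosedIdealIn J A) {M C : ℝ} (hC : 0 ≤ C) (hbai : IsBAIFor J M)
    {θ : (H →L[ℂ] H) → (K →L[ℂ] K)} (hθ : IsRepOn J θ) (hbd : ∀ j ∈ J, ‖θ j‖ ≤ C * ‖j‖)
    (hnd : ActsNonDeg (θ '' J)) {a : H →L[ℂ] H} (ha : a ∈ A) :
    ∃ T : K →L[ℂ] K, ‖T‖ ≤ M * C * ‖a‖ ∧ ∀ j ∈ J, T * θ j = θ (a * j) := by
  obtain ⟨hJA, -, -, hadd, hsmul, hideal⟩ := hJ
  obtain ⟨ι, _, _, e, heJ, heM, he⟩ := hbai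
  have haeJ : ∀ i, a * e i ∈ J := fun i => (hideal a ha _ (heJ i)).1
  have hgen : ∀ j ∈ J, ∀ ξ : K,
      Tendsto (fun i => θ (a * e i) (θ j ξ)) atTop (𝓝 (θ (a * j) ξ)) := by
    intro j hj ξ
    have hmul : ∀ i, θ (a * e i) (θ j ξ) = θ (a * (e i * j)) ξ := fun i => by
      rw [← mul_assoc, hθ.2.2.1 _ (haeJ i) j hj]; rfl
    have hlim : Tendsto (fun i => a * (e i * j)) atTop (𝓝 (a * j)) :=
      (tendsto_iff_norm_sub_tendsto_zero.2 (he j hj).2).const_mul a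
    simp only [hmul]
    exact ((continuous_eval_const ξ).tendsto _).comp <| hθ.tendsto_of_tendsto hsmul hadd hbd
      (fun i => (hideal a ha _ (hideal (e i) (hJA (heJ i)) j hj).1).1) (hideal a ha j hj).1 hlim
  have hbound : ∀ i, ‖θ (a * e i)‖ ≤ M * C * ‖a‖ := fun i =>
    calc ‖θ (a * e i)‖ ≤ C * ‖a * e i‖ := hbd _ (haeJ i)
      _ ≤ C * (‖a‖ * M) := by gcongr; exact (norm_mul_le _ _).trans (by gcongr; exact heM i)
      _ = M * C * ‖a‖ := by ring
  have hcauchy : ∀ x, CauchySeq fun i => θ (a * e i) x := by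
    refine ContinuousLinearMap.cauchySeq_apply_of_dense hbound
      (Submodule.dense_iff_topologicalClosure_eq_top.2 hnd) fun y hy => ?_
    refine ContinuousLinearMap.cauchySeq_apply_of_mem_span ?_ hy
    rintro _ ⟨_, ⟨j, hj, rfl⟩, ξ, -, rfl⟩
    exact (hgen j hj ξ).cauchySeq
  obtain ⟨T, hT, hTnorm⟩ := ContinuousLinearMap.exists_tendsto_apply_of_cauchySeq hbound hcauchy
  exact ⟨T, hTnorm, fun j hj => ContinuousLinearMap.ext fun ξ =>
    tendsto_nhds_unique (hT _) (hgen j hj ξ)⟩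

theorem extension_of_nondegenerate_rep_general
    {H K : Type} [NormedAddCommGroup H] [InnerProductSpace ℂ H]
    [NormedAddCommGroup K] [InnerProductSpace ℂ K] [CompleteSpace K]
    (A J : Set (H →L[ℂ] H)) (hA : IsOpAlg A) (hJ : IsClosedIdealIn J A)
    (M C : ℝ) (hC : 0 ≤ C) (hbai : IsBAIFor J M)
    (θ : (H →L[ℂ] H) → (K →L[ℂ] K)) (hrep : IsRepOn J θ)
    (hbd : ∀ j ∈ J, ‖θ j‖ ≤ C * ‖j‖)
    (hnd : ActsNonDeg (θ '' J)) :
    ∃ θh : (H →L[ℂ] H) → (K →L[ℂ] K),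
      IsRepOn A θh ∧ (∀ j ∈ J, θh j = θ j) ∧
      (∀ a ∈ A, ‖θh a‖ ≤ M * C * ‖a‖) ∧
      (∀ θ' : (H →L[ℂ] H) → (K →L[ℂ] K), IsRepOn A θ' → (∀ j ∈ J, θ' j = θ j) →
        ∀ a ∈ A, θ' a = θh a) := by
  choose! θh hθh_norm hθh_mul using fun a (ha : a ∈ A) =>
    hJ.exists_opNorm_le_mul_rep_eq hC hbai hrep hbd hnd ha
  obtain ⟨-, -, hAadd, hAsmul, hAmul⟩ := hA
  obtain ⟨hJA, -, -, -, -, hideal⟩ := hJ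
  obtain ⟨hθadd, hθsmul, hθmul, -⟩ := hrep
  have hext : ∀ {S R : K →L[ℂ] K}, (∀ j ∈ J, S * θ j = R * θ j) → S = R := fun h =>
    hnd.ext <| by rintro _ ⟨j, hj, rfl⟩; exact h j hj
  refine ⟨θh, ⟨fun a ha b hb => hext fun j hj => ?_, fun c a ha => hext fun j hj => ?_,
    fun a ha b hb => hext fun j hj => ?_, M * C, hθh_norm⟩, fun j hj => hext fun x hx => ?_,
    hθh_norm, fun θ' hθ' hθ'θ a ha => hext fun j hj => ?_⟩
  · rw [hθh_mul _ (hAadd a ha b hb) j hj, add_mul, add_mul, hθh_mul a ha j hj, hθh_mul b hb j hj,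
      hθadd _ (hideal a ha j hj).1 _ (hideal b hb j hj).1]
  · rw [hθh_mul _ (hAsmul c a ha) j hj, smul_mul_assoc, smul_mul_assoc, hθh_mul a ha j hj,
      hθsmul c _ (hideal a ha j hj).1]
  · rw [hθh_mul _ (hAmul a ha b hb) j hj, mul_assoc, mul_assoc, hθh_mul b hb j hj,
      hθh_mul a ha _ (hideal b hb j hj).1]
  · rw [hθh_mul j (hJA hj) x hx, hθmul j hj x hx]
  · rw [hθh_mul a ha j hj, ← hθ'θ j hj, ← hθ'.2.2.1 a ha j (hJA hj), hθ'θ _ (hideal a ha j hj).1]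

theorem extension_of_nondegenerate_rep
    {H K : Type} [NormedAddCommGroup H] [InnerProductSpace ℂ H] [CompleteSpace H]
    [NormedAddCommGroup K] [InnerProductSpace ℂ K] [CompleteSpace K]
    (A J : Set (H →L[ℂ] H)) (hA : IsOpAlg A) (hJ : IsClosedIdealIn J A)
    (M C : ℝ) (hC : 0 ≤ C) (hbai : IsBAIFor J M)
    (θ : (H →L[ℂ] H) → (K →L[ℂ] K)) (hrep : IsRepOn J θ)
    (hbd : ∀ j ∈ J, ‖θ j‖ ≤ C * ‖j‖)
    (hnd : ActsNonDeg (θ '' J)) :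
    ∃ θh : (H →L[ℂ] H) → (K →L[ℂ] K),
      IsRepOn A θh ∧ (∀ j ∈ J, θh j = θ j) ∧
      (∀ a ∈ A, ‖θh a‖ ≤ M * C * ‖a‖) ∧
      (∀ θ' : (H →L[ℂ] H) → (K →L[ℂ] K), IsRepOn A θ' → (∀ j ∈ J, θ' j = θ j) →
        ∀ a ∈ A, θ' a = θh a) :=
  extension_of_nondegenerate_rep_general A J hA hJ M C hC hbai θ hrep hbd hnd

end
end

section
/- Let A be an operator algebra on a Hilbert space H, let J ⊆ A be a closed two-sided ideal with a bounded approximate identity (e_λ) with sup_λ ‖e_λ‖ = M, let θ : J → B(K) be a non-degenerate completely bounded representation, and let θ̂ : A → B(K) be its unique extension. Then for every n ∈ ℕ, ‖θ̂⁽ⁿ⁾‖ ≤ M ‖θ⁽ⁿ⁾‖; in particular θ̂ is completely bounded with ‖θ̂‖_cb ≤ M ‖θ‖_cb. -/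
noncomputable section

variable {H K : Type} [NormedAddCommGroup H] [InnerProductSpace ℂ H]
  [NormedAddCommGroup K] [InnerProductSpace ℂ K]

/-! On the dense subspace spanned by `θ(J)K`, `θ̂(b)` is the strong limit of `θ(b eₜ)`, because
`θ(b eₜ) θ(j) ξ = θ(b eₜ j) ξ → θ(b j) ξ = θ̂(b) θ(j) ξ`. Hence, for `a ∈ Mₙ(A)`, `θ̂⁽ⁿ⁾(a)` is the
strong limit of `θ⁽ⁿ⁾(a · diag eₜ)` on a dense subspace of `K⁽ⁿ⁾`; since `a · diag eₜ ∈ Mₙ(J)`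
has norm at most `M ‖a‖`, this gives `‖θ̂⁽ⁿ⁾(a)‖ ≤ M ‖θ⁽ⁿ⁾‖ ‖a‖`. -/

open Filter Topology

lemma amp_apply_eq_toLp (n : ℕ) (a : Matrix (Fin n) (Fin n) (H →L[ℂ] H))
    (v : PiLp 2 fun _ : Fin n => H) :
    amp n a v = WithLp.toLp 2 fun i => ∑ j, a i j (v j) := by
  ext i
  simp [amp, PiLp.continuousLinearEquiv]
  rfl

lemma amp_apply (n : ℕ) (a : Matrix (Fin n) (Fin n) (H →L[ℂ] H))
    (v : PiLp 2 fun _ : Fin n => H) (i : Fin n) :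
    amp n a v i = ∑ j, a i j (v j) := by
  rw [amp_apply_eq_toLp, PiLp.toLp_apply]

lemma amp_mul (n : ℕ) (a b : Matrix (Fin n) (Fin n) (H →L[ℂ] H)) :
    amp n (a * b) = amp n a ∘L amp n b := by
  ext v i
  simp only [ContinuousLinearMap.comp_apply, amp_apply, Matrix.mul_apply, sum_apply,
    mul_apply_eq_comp, map_sum]
  exact Finset.sum_comm

lemma amp_diagonal_apply (n : ℕ) (e : H →L[ℂ] H) (v : PiLp 2 fun _ : Fin n => H) (i : Fin n) :
    amp n (Matrix.diagonal fun _ => e) v i = e (v i) := by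
  rw [amp_apply, Finset.sum_eq_single i
    (fun j _ hji => by simp [Matrix.diagonal_apply_ne _ hji.symm]) (by simp)]
  simp

lemma norm_amp_diagonal_le (n : ℕ) (e : H →L[ℂ] H) :
    ‖amp n (Matrix.diagonal fun _ => e)‖ ≤ ‖e‖ := by
  refine ContinuousLinearMap.opNorm_le_bound _ (norm_nonneg e) fun v => ?_
  rw [PiLp.norm_eq_of_L2, PiLp.norm_eq_of_L2, ← Real.sqrt_sq (norm_nonneg e),
    ← Real.sqrt_mul (sq_nonneg _), Finset.mul_sum]
  gcongr with i
  rw [amp_diagonal_apply, ← mul_pow]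
  gcongr
  exact e.le_opNorm _

lemma norm_amp_mul_diagonal_le (n : ℕ) (a : Matrix (Fin n) (Fin n) (H →L[ℂ] H))
    (e : H →L[ℂ] H) : ‖amp n (a * Matrix.diagonal (n := Fin n) fun _ => e)‖ ≤ ‖amp n a‖ * ‖e‖ := by
  rw [amp_mul]
  exact (ContinuousLinearMap.opNorm_comp_le _ _).trans (by gcongr; exact norm_amp_diagonal_le n e)

lemma tendsto_amp_apply {n : ℕ} {ι : Type*} {l : Filter ι}
    {x : ι → Matrix (Fin n) (Fin n) (H →L[ℂ] H)} {y : Matrix (Fin n) (Fin n) (H →L[ℂ] H)}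
    {v : PiLp 2 fun _ : Fin n => H}
    (h : ∀ i j, Tendsto (fun t => x t i j (v j)) l (𝓝 (y i j (v j)))) :
    Tendsto (fun t => amp n (x t) v) l (𝓝 (amp n y v)) := by
  simp only [amp_apply_eq_toLp]
  exact ((PiLp.continuous_toLp 2 _).tendsto _).comp <|
    tendsto_pi_nhds.2 fun i => tendsto_finsetSum _ fun j _ => h i j

lemma PiLp.dense_setOf_forall_mem {p : ENNReal} [Fact (1 ≤ p)] {ι : Type*} [Fintype ι]
    {β : ι → Type*} [∀ i, SeminormedAddCommGroup (β i)] {s : ∀ i, Set (β i)}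
    (hs : ∀ i, Dense (s i)) :
    Dense {v : PiLp p β | ∀ i, v i ∈ s i} := by
  simpa [Set.preimage, PiLp.homeomorph] using
    (dense_pi Set.univ fun i _ => hs i).preimage (PiLp.homeomorph p β).isOpenMap

lemma ContinuousLinearMap.opNorm_le_of_dense {𝕜 E F : Type*} [NontriviallyNormedField 𝕜]
    [SeminormedAddCommGroup E] [SeminormedAddCommGroup F] [NormedSpace 𝕜 E] [NormedSpace 𝕜 F]
    (T : E →L[𝕜] F) {s : Set E} (hs : Dense s) {B : ℝ} (hB : 0 ≤ B) (h : ∀ v ∈ s, ‖T v‖ ≤ B * ‖v‖) : ‖T‖ ≤ B :=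
  T.opNorm_le_bound hB <| hs.induction h <|
    isClosed_le T.continuous.norm (continuous_const.mul continuous_norm)

lemma IsClosedIdealIn.sub_mem {J A : Set (H →L[ℂ] H)} (hJ : IsClosedIdealIn J A)
    {u w : H →L[ℂ] H} (hu : u ∈ J) (hw : w ∈ J) : u - w ∈ J := by
  simpa [sub_eq_add_neg] using hJ.2.2.2.1 u hu _ (hJ.2.2.2.2.1 (-1) w hw)

lemma IsRepOn.map_sub_s1 {J : Set (H →L[ℂ] H)} {θ : (H →L[ℂ] H) → (K →L[ℂ] K)}
    (hθ : IsRepOn J θ) {u w : H →L[ℂ] H} (hw : w ∈ J) (huw : u - w ∈ J) :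
    θ (u - w) = θ u - θ w := by
  rw [eq_sub_iff_add_eq, ← hθ.1 _ huw _ hw, sub_add_cancel]

lemma IsRepOn.continuousOn {J : Set (H →L[ℂ] H)} {θ : (H →L[ℂ] H) → (K →L[ℂ] K)}
    (hθ : IsRepOn J θ) (hsub : ∀ u ∈ J, ∀ w ∈ J, u - w ∈ J) : ContinuousOn θ J := by
  obtain ⟨C, hC⟩ := hθ.2.2.2
  refine (LipschitzOnWith.of_dist_le' (K := C) fun u hu w hw => ?_).continuousOn
  rw [dist_eq_norm, dist_eq_norm, ← hθ.map_sub_s1 hw (hsub u hu w hw)]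
  exact hC _ (hsub u hu w hw)

lemma tendsto_rep_mul_approxUnit_apply {A J : Set (H →L[ℂ] H)} (hJ : IsClosedIdealIn J A)
    {θ θh : (H →L[ℂ] H) → (K →L[ℂ] K)} (hθ : IsRepOn J θ) (hθh : IsRepOn A θh)
    (hext : ∀ j ∈ J, θh j = θ j) {ι : Type*} {l : Filter ι} {e : ι → H →L[ℂ] H}
    (he : ∀ t, e t ∈ J) (happrox : ∀ j ∈ J, Tendsto (fun t => e t * j) l (𝓝 j))
    {b : H →L[ℂ] H} (hb : b ∈ A) {x : K}
    (hx : x ∈ Submodule.span ℂ {x : K | ∃ t ∈ θ '' J, ∃ ξ ∈ (⊤ : Submodule ℂ K), x = t ξ}) :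
    Tendsto (fun t => θ (b * e t) x) l (𝓝 (θh b x)) := by
  induction hx using Submodule.span_induction with
  | mem x hx =>
    obtain ⟨_, ⟨j, hj, rfl⟩, ξ, -, rfl⟩ := hx
    have hbe : ∀ t, b * e t ∈ J := fun t => (hJ.2.2.2.2.2 b hb _ (he t)).1
    have hbj : b * j ∈ J := (hJ.2.2.2.2.2 b hb j hj).1
    have hbej : Tendsto (fun t => b * e t * j) l (𝓝[J] (b * j)) := by
      refine tendsto_nhdsWithin_iff.2 ⟨?_, Eventually.of_forall fun t => ?_⟩
      · simpa only [mul_assoc] using (happrox j hj).const_mul b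
      · exact (hJ.2.2.2.2.2 _ (hJ.1 (hbe t)) j hj).1
    have hθh_apply : θh b (θ j ξ) = θ (b * j) ξ := by
      rw [← hext j hj, ← mul_apply_eq_comp, ← hθh.2.2.1 b hb j (hJ.1 hj), hext _ hbj]
    simp only [hθh_apply, ← mul_apply_eq_comp, ← hθ.2.2.1 _ (hbe _) _ hj]
    exact ((continuous_eval_const ξ).tendsto _).comp
      (((hθ.continuousOn fun u hu w hw => hJ.sub_mem hu hw) _ hbj).tendsto.comp hbej)
  | zero => simpa using tendsto_const_nhds
  | add x y _ _ hx hy => simpa only [map_add] using hx.add hy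
  | smul c x _ hx => simpa only [map_smul] using hx.const_smul c

theorem ampBound_of_approxUnit {A J : Set (H →L[ℂ] H)} (hJ : IsClosedIdealIn J A)
    {θ θh : (H →L[ℂ] H) → (K →L[ℂ] K)} (hθ : IsRepOn J θ) (hθh : IsRepOn A θh)
    (hext : ∀ j ∈ J, θh j = θ j) (hnd : ActsNonDeg (θ '' J)) {ι : Type*} {l : Filter ι}
    [l.NeBot] {e : ι → H →L[ℂ] H} (he : ∀ t, e t ∈ J) {M : ℝ} (heM : ∀ t, ‖e t‖ ≤ M)
    (happrox : ∀ j ∈ J, Tendsto (fun t => e t * j) l (𝓝 j)) {n : ℕ} {C : ℝ} (hC0 : 0 ≤ C)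
    (hC : AmpBound J θ n C) : AmpBound A θh n (M * C) := by
  intro a ha
  obtain ⟨t₀⟩ := nonempty_of_neBot l
  have hM : 0 ≤ M := (norm_nonneg _).trans (heM t₀)
  have hD : Dense (Submodule.span ℂ
      {x : K | ∃ t ∈ θ '' J, ∃ ξ ∈ (⊤ : Submodule ℂ K), x = t ξ} : Set K) :=
    Submodule.dense_iff_topologicalClosure_eq_top.2 hnd
  refine (amp n (a.map θh)).opNorm_le_of_dense (PiLp.dense_setOf_forall_mem fun _ => hD)
    (by positivity) fun v hv => ?_
  let x : ι → Matrix (Fin n) (Fin n) (H →L[ℂ] H) := fun t => a * Matrix.diagonal fun _ => e t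
  have hx : ∀ t i j, x t i j = a i j * e t := fun t i j => Matrix.mul_diagonal _ _ _ _
  have hlim : Tendsto (fun t => amp n ((x t).map θ) v) l (𝓝 (amp n (a.map θh) v)) :=
    tendsto_amp_apply fun i j => by
      simpa only [Matrix.map_apply, hx] using
        tendsto_rep_mul_approxUnit_apply hJ hθ hθh hext he happrox (ha i j) (hv j)
  refine le_of_tendsto hlim.norm (Eventually.of_forall fun t => ?_)
  have hxJ : MatEntriesIn J (x t) := fun i j => hx t i j ▸ (hJ.2.2.2.2.2 _ (ha i j) _ (he t)).1
  calc ‖amp n ((x t).map θ) v‖ ≤ C * ‖amp n (x t)‖ * ‖v‖ :=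
        (ContinuousLinearMap.le_opNorm _ _).trans (by gcongr; exact hC _ hxJ)
    _ ≤ C * (‖amp n a‖ * M) * ‖v‖ := by
        gcongr
        exact (norm_amp_mul_diagonal_le n a (e t)).trans (by gcongr; exact heM t)
    _ = M * C * ‖amp n a‖ * ‖v‖ := by ring

theorem extension_is_completely_bounded_general
    {H K : Type} [NormedAddCommGroup H] [InnerProductSpace ℂ H]
    [NormedAddCommGroup K] [InnerProductSpace ℂ K]
    (A J : Set (H →L[ℂ] H)) (hJ : IsClosedIdealIn J A)
    (M : ℝ) (hbai : IsBAIFor J M)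
    (θ θh : (H →L[ℂ] H) → (K →L[ℂ] K)) (hrep : IsRepOn J θ)
    (hnd : ActsNonDeg (θ '' J))
    (hreph : IsRepOn A θh) (hext : ∀ j ∈ J, θh j = θ j) :
    (∀ (n : ℕ) (C : ℝ), 0 ≤ C → AmpBound J θ n C → AmpBound A θh n (M * C)) ∧
    (∀ C : ℝ, 0 ≤ C → (∀ n : ℕ, AmpBound J θ n C) →
      ∀ n : ℕ, AmpBound A θh n (M * C)) := by
  obtain ⟨ι, _, _, e, he, heM, happrox⟩ := hbai
  have main (n : ℕ) (C : ℝ) (hC0 : 0 ≤ C) (hC : AmpBound J θ n C) : AmpBound A θh n (M * C) :=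
    ampBound_of_approxUnit hJ hrep hreph hext hnd (l := atTop) he heM
      (fun j hj => tendsto_iff_norm_sub_tendsto_zero.2 (happrox j hj).2) hC0 hC
  exact ⟨main, fun C hC0 hC n => main n C hC0 (hC n)⟩

theorem extension_is_completely_bounded
    {H K : Type} [NormedAddCommGroup H] [InnerProductSpace ℂ H] [CompleteSpace H]
    [NormedAddCommGroup K] [InnerProductSpace ℂ K] [CompleteSpace K]
    (A J : Set (H →L[ℂ] H)) (hA : IsOpAlg A) (hJ : IsClosedIdealIn J A)
    (M : ℝ) (hbai : IsBAIFor J M)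
    (θ θh : (H →L[ℂ] H) → (K →L[ℂ] K)) (hrep : IsRepOn J θ)
    (hcb : CompletelyBoundedOn J θ) (hnd : ActsNonDeg (θ '' J))
    (hreph : IsRepOn A θh) (hext : ∀ j ∈ J, θh j = θ j) :
    (∀ (n : ℕ) (C : ℝ), 0 ≤ C → AmpBound J θ n C → AmpBound A θh n (M * C)) ∧
    (∀ C : ℝ, 0 ≤ C → (∀ n : ℕ, AmpBound J θ n C) →
      ∀ n : ℕ, AmpBound A θh n (M * C)) :=
  extension_is_completely_bounded_general A J hJ M hbai θ θh hrep hnd hreph hext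

end
end

section
/- Let A be an operator algebra with the total reduction property, let J ⊆ A be a closed two-sided ideal, and let θ : A → B(H) be a representation. Then there exist a closed subspace H₀ ⊆ H, representations ρ : A → B(H₀) and τ : A → B(H₀^⊥), and an invertible X ∈ B(H), such that ρ|_J acts non-degenerately on H₀, τ(J) = 0, and X θ(a) X⁻¹ = ρ(a) ⊕ τ(a) for all a ∈ A. -/
noncomputable section

variable {H K : Type} [NormedAddCommGroup H] [InnerProductSpace ℂ H]
  [NormedAddCommGroup K] [InnerProductSpace ℂ K]

/- `M = [θ(J) K]` is `θ(A)`-invariant because `J` is a left ideal, so TRP yields an idempotent `E`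
onto `M` commuting with `θ(A)`. The orthogonal projection `P` onto `M` has the same range as `E`,
hence `X = 1 - P + E` is invertible with inverse `1 + P - E`, and `P X θ(a) X⁻¹ = θ(a) P` makes
`Mᗮ` invariant. As `θ(j) = E θ(j) = θ(j) E`, the conjugate of `θ(j)` vanishes on `Mᗮ` and sends
`E ξ` to `θ(j) ξ`, which gives non-degeneracy on `M` without an approximate identity. -/

open Submodule

section SameRange

variable {R : Type*} [Ring R] {p e : R}

theorem isIdempotentElem_of_mul_eq_of_mul_eq (hpe : p * e = e) (hep : e * p = p) :
    IsIdempotentElem p := by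
  unfold IsIdempotentElem
  nth_rewrite 2 [← hep]
  rw [← mul_assoc, hpe, hep]

/-- `p * e = e` and `e * p = p` say that `p` and `e` are idempotents with the same range. -/
def sameRangeUnit (hpe : p * e = e) (hep : e * p = p) : Rˣ :=
  have hp := isIdempotentElem_of_mul_eq_of_mul_eq hpe hep
  have he := isIdempotentElem_of_mul_eq_of_mul_eq hep hpe
  { val := 1 - p + e
    inv := 1 + p - e
    val_inv := by
      simp only [mul_add, mul_sub, add_mul, sub_mul, one_mul, mul_one, hp.eq, he.eq, hpe, hep]
      abel
    inv_val := by
      simp only [mul_add, mul_sub, add_mul, sub_mul, one_mul, mul_one, hp.eq, he.eq, hpe, hep]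
      abel }

variable (hpe : p * e = e) (hep : e * p = p) {t : R}

@[simp]
theorem sameRangeUnit_val : (sameRangeUnit hpe hep : R) = 1 - p + e := rfl

@[simp]
theorem sameRangeUnit_inv : ((sameRangeUnit hpe hep)⁻¹ : Rˣ) = (1 + p - e : R) := rfl

theorem sameRangeUnit_conj_mul (ht : Commute e t) :
    ↑(sameRangeUnit hpe hep) * t * ↑(sameRangeUnit hpe hep)⁻¹ * e = e * t := by
  have he := (isIdempotentElem_of_mul_eq_of_mul_eq hep hpe).eq
  have hinv : ((sameRangeUnit hpe hep)⁻¹ : Rˣ) * e = e := by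
    simp only [sameRangeUnit_inv, add_mul, sub_mul, one_mul, hpe, he, add_sub_cancel_right]
  have hval : (sameRangeUnit hpe hep : R) * e = e := by
    simp only [sameRangeUnit_val, add_mul, sub_mul, one_mul, hpe, he, sub_add_cancel]
  rw [mul_assoc _ _ e, hinv, mul_assoc, ← ht.eq, ← mul_assoc, hval]

theorem mul_sameRangeUnit_conj (ht : Commute e t) :
    p * (↑(sameRangeUnit hpe hep) * t * ↑(sameRangeUnit hpe hep)⁻¹) = t * p := by
  have hp := (isIdempotentElem_of_mul_eq_of_mul_eq hpe hep).eq
  have he := (isIdempotentElem_of_mul_eq_of_mul_eq hep hpe).eq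
  have hval : p * (sameRangeUnit hpe hep : R) = e := by
    simp only [sameRangeUnit_val, mul_add, mul_sub, mul_one, hp, hpe, sub_self, zero_add]
  have hinv : e * ((sameRangeUnit hpe hep)⁻¹ : Rˣ) = p := by
    simp only [sameRangeUnit_inv, mul_add, mul_sub, mul_one, he, hep, add_sub_cancel_left]
  rw [← mul_assoc, ← mul_assoc, hval, ht.eq, mul_assoc, hinv]

theorem mul_sameRangeUnit_inv (ht : t * e = t) : t * ↑(sameRangeUnit hpe hep)⁻¹ = t * p := by
  simp only [sameRangeUnit_inv, mul_add, mul_sub, mul_one, ht, add_sub_cancel_left]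

end SameRange

section RangeSimilarity

variable {𝕜 F : Type*} [RCLike 𝕜] [NormedAddCommGroup F] [InnerProductSpace 𝕜 F]
  {M : Submodule 𝕜 F} {E t : F →L[𝕜] F}

theorem apply_eq_self_of_range_eq (hE : IsIdempotentElem E)
    (hEM : LinearMap.range (E : F →ₗ[𝕜] F) = M) {ξ : F} (hξ : ξ ∈ M) : E ξ = ξ :=
  (LinearMap.IsIdempotentElem.mem_range_iff
    (ContinuousLinearMap.IsIdempotentElem.toLinearMap hE)).1 (hEM ▸ hξ)

variable [M.HasOrthogonalProjection]

theorem starProjection_mul_of_range_le (h : LinearMap.range (E : F →ₗ[𝕜] F) ≤ M) :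
    M.starProjection * E = E := by
  ext ξ
  exact starProjection_eq_self_iff.2 (h (LinearMap.mem_range_self _ ξ))

variable (hE : IsIdempotentElem E) (hEM : LinearMap.range (E : F →ₗ[𝕜] F) = M)
include hE hEM

theorem mul_starProjection_of_range_eq : E * M.starProjection = M.starProjection :=
  ContinuousLinearMap.ext fun ξ => apply_eq_self_of_range_eq hE hEM (M.starProjection_apply_mem ξ)

def rangeSimilarity : (F →L[𝕜] F)ˣ :=
  sameRangeUnit (starProjection_mul_of_range_le hEM.le) (mul_starProjection_of_range_eq hE hEM)

theorem rangeSimilarity_conj_mul (ht : Commute E t) :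
    ↑(rangeSimilarity hE hEM) * t * ↑(rangeSimilarity hE hEM)⁻¹ * E = E * t :=
  sameRangeUnit_conj_mul _ _ ht

theorem starProjection_mul_rangeSimilarity_conj (ht : Commute E t) :
    M.starProjection * (↑(rangeSimilarity hE hEM) * t * ↑(rangeSimilarity hE hEM)⁻¹) =
      t * M.starProjection :=
  mul_sameRangeUnit_conj _ _ ht

theorem mul_rangeSimilarity_inv (htE : t * E = t) :
    t * ↑(rangeSimilarity hE hEM)⁻¹ = t * M.starProjection :=
  mul_sameRangeUnit_inv _ _ htE

theorem rangeSimilarity_conj_apply_mem (ht : Commute E t) {ξ : F} (hξ : ξ ∈ M) :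
    (↑(rangeSimilarity hE hEM) * t * ↑(rangeSimilarity hE hEM)⁻¹) ξ ∈ M := by
  obtain ⟨η, rfl⟩ := hEM.ge hξ
  exact hEM.le ⟨t η, (DFunLike.congr_fun (rangeSimilarity_conj_mul hE hEM ht) η).symm⟩

theorem rangeSimilarity_conj_apply_mem_orthogonal (ht : Commute E t) {ξ : F} (hξ : ξ ∈ Mᗮ) :
    (↑(rangeSimilarity hE hEM) * t * ↑(rangeSimilarity hE hEM)⁻¹) ξ ∈ Mᗮ := by
  rw [← starProjection_apply_eq_zero_iff] at hξ ⊢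
  have := DFunLike.congr_fun (starProjection_mul_rangeSimilarity_conj hE hEM ht) ξ
  simpa [hξ] using this

theorem rangeSimilarity_conj_apply_idempotent (ht : Commute E t) (htE : E * t = t) (ξ : F) :
    (↑(rangeSimilarity hE hEM) * t * ↑(rangeSimilarity hE hEM)⁻¹) (E ξ) = t ξ := by
  simpa [htE] using DFunLike.congr_fun (rangeSimilarity_conj_mul hE hEM ht) ξ

theorem rangeSimilarity_conj_apply_eq_zero (ht : Commute E t) (htE : E * t = t) {ξ : F}
    (hξ : ξ ∈ Mᗮ) : (↑(rangeSimilarity hE hEM) * t * ↑(rangeSimilarity hE hEM)⁻¹) ξ = 0 := by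
  rw [mul_assoc, mul_rangeSimilarity_inv hE hEM (ht.eq.symm.trans htE)]
  simp [(starProjection_apply_eq_zero_iff M).2 hξ]

end RangeSimilarity

section closSpanOrbit

variable {T : Set (K →L[ℂ] K)} {V W : Submodule ℂ K}

theorem isClosed_closSpanOrbit : IsClosed (closSpanOrbit T V : Set K) :=
  isClosed_topologicalClosure _

theorem apply_mem_closSpanOrbit {t : K →L[ℂ] K} {ξ : K} (ht : t ∈ T) (hξ : ξ ∈ V) :
    t ξ ∈ closSpanOrbit T V :=
  le_topologicalClosure _ (subset_span ⟨t, ht, ξ, hξ, rfl⟩)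

theorem closSpanOrbit_le (hW : IsClosed (W : Set K)) (h : ∀ t ∈ T, ∀ ξ ∈ V, t ξ ∈ W) :
    closSpanOrbit T V ≤ W :=
  topologicalClosure_minimal _ (span_le.2 fun _ ⟨t, ht, ξ, hξ, hx⟩ => hx ▸ h t ht ξ hξ) hW

theorem apply_mem_closSpanOrbit_of_mul_mem {s : K →L[ℂ] K} (hs : ∀ t ∈ T, s * t ∈ T) {ξ : K}
    (hξ : ξ ∈ closSpanOrbit T V) : s ξ ∈ closSpanOrbit T V :=
  closSpanOrbit_le (W := (closSpanOrbit T V).comap (s : K →ₗ[ℂ] K))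
    (isClosed_closSpanOrbit.preimage s.continuous)
    (fun t ht η hη => show (s * t) η ∈ _ from apply_mem_closSpanOrbit (hs t ht) hη) hξ

end closSpanOrbit

theorem trp_splitting_along_ideal_general
    {H K : Type} [NormedAddCommGroup H] [InnerProductSpace ℂ H]
    [NormedAddCommGroup K] [InnerProductSpace ℂ K] [CompleteSpace K]
    (A J : Set (H →L[ℂ] H)) (htrp : HasTRP A)
    (hJ : IsClosedIdealIn J A)
    (θ : (H →L[ℂ] H) → (K →L[ℂ] K)) (hrep : IsRepOn A θ) :
    ∃ H₀ : Submodule ℂ K, IsClosed (H₀ : Set K) ∧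
      ∃ X Xinv : K →L[ℂ] K, Xinv * X = 1 ∧ X * Xinv = 1 ∧
        (∀ a ∈ A, ∀ ξ ∈ H₀, (X * θ a * Xinv) ξ ∈ H₀) ∧
        (∀ a ∈ A, ∀ ξ ∈ H₀ᗮ, (X * θ a * Xinv) ξ ∈ H₀ᗮ) ∧
        (∀ j ∈ J, ∀ ξ ∈ H₀ᗮ, (X * θ j * Xinv) ξ = 0) ∧
        closSpanOrbit ((fun a => X * θ a * Xinv) '' J) H₀ = H₀ := by
  obtain ⟨hJA, -, -, -, -, hJmul⟩ := hJ
  set M := closSpanOrbit (θ '' J) ⊤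
  have hθJ : ∀ j ∈ J, ∀ ξ, θ j ξ ∈ M := fun j hj ξ =>
    apply_mem_closSpanOrbit ⟨j, hj, rfl⟩ trivial
  have hθM : ∀ a ∈ A, ∀ ξ ∈ M, θ a ξ ∈ M := by
    refine fun a ha ξ => apply_mem_closSpanOrbit_of_mul_mem ?_
    rintro _ ⟨j, hj, rfl⟩
    exact ⟨a * j, (hJmul a ha j hj).1, hrep.2.2.1 a ha j (hJA hj)⟩
  obtain ⟨E, hE, hEM, hEθ⟩ := htrp K θ hrep M isClosed_closSpanOrbit hθM
  have : CompleteSpace M := isClosed_closSpanOrbit.completeSpace_coe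
  have hEθJ : ∀ j ∈ J, E * θ j = θ j := fun j hj =>
    ContinuousLinearMap.ext fun ξ => apply_eq_self_of_range_eq hE hEM (hθJ j hj ξ)
  set X := rangeSimilarity hE hEM
  refine ⟨M, isClosed_closSpanOrbit, X, ↑X⁻¹, X.inv_mul, X.mul_inv,
    fun a ha _ => rangeSimilarity_conj_apply_mem hE hEM (hEθ a ha),
    fun a ha _ => rangeSimilarity_conj_apply_mem_orthogonal hE hEM (hEθ a ha),
    fun j hj _ => rangeSimilarity_conj_apply_eq_zero hE hEM (hEθ j (hJA hj)) (hEθJ j hj),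
    le_antisymm ?_ ?_⟩
  · refine closSpanOrbit_le isClosed_closSpanOrbit ?_
    rintro _ ⟨j, hj, rfl⟩ ξ hξ
    exact rangeSimilarity_conj_apply_mem hE hEM (hEθ j (hJA hj)) hξ
  · refine closSpanOrbit_le isClosed_closSpanOrbit ?_
    rintro _ ⟨j, hj, rfl⟩ ξ -
    rw [← rangeSimilarity_conj_apply_idempotent hE hEM (hEθ j (hJA hj)) (hEθJ j hj)]
    exact apply_mem_closSpanOrbit ⟨j, hj, rfl⟩ (hEM.le (LinearMap.mem_range_self _ ξ))

theorem trp_splitting_along_ideal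
    {H K : Type} [NormedAddCommGroup H] [InnerProductSpace ℂ H] [CompleteSpace H]
    [NormedAddCommGroup K] [InnerProductSpace ℂ K] [CompleteSpace K]
    (A J : Set (H →L[ℂ] H)) (hA : IsOpAlg A) (htrp : HasTRP A)
    (hJ : IsClosedIdealIn J A)
    (θ : (H →L[ℂ] H) → (K →L[ℂ] K)) (hrep : IsRepOn A θ) :
    ∃ H₀ : Submodule ℂ K, IsClosed (H₀ : Set K) ∧
      ∃ X Xinv : K →L[ℂ] K, Xinv * X = 1 ∧ X * Xinv = 1 ∧
        (∀ a ∈ A, ∀ ξ ∈ H₀, (X * θ a * Xinv) ξ ∈ H₀) ∧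
        (∀ a ∈ A, ∀ ξ ∈ H₀ᗮ, (X * θ a * Xinv) ξ ∈ H₀ᗮ) ∧
        (∀ j ∈ J, ∀ ξ ∈ H₀ᗮ, (X * θ j * Xinv) ξ = 0) ∧
        closSpanOrbit ((fun a => X * θ a * Xinv) '' J) H₀ = H₀ :=
  trp_splitting_along_ideal_general A J htrp hJ θ hrep

end
end

section
/- Let A ⊆ B(H) be an operator algebra and let J ⊆ A be a closed two-sided ideal of A that is self-adjoint (J* = J). Then J is a closed two-sided ideal of C*(A), the C*-algebra generated by A in B(H). -/
noncomputable section

variable {H K : Type} [NormedAddCommGroup H] [InnerProductSpace ℂ H]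
  [NormedAddCommGroup K] [InnerProductSpace ℂ K]

/-! The idealizer `{a | a J ⊆ J, J a ⊆ J}` of a closed self-adjoint subspace `J` is a closed
star-subalgebra; when `J` is an ideal of `A` it contains `A`, hence also `C*(A)`. -/

section Idealizer

variable {R : Type*} [NonUnitalRing R]

def idealizer (J : Set R) : Set R :=
  {a | ∀ j ∈ J, a * j ∈ J ∧ j * a ∈ J}

variable {J : Set R}

theorem isClosed_idealizer [TopologicalSpace R] [ContinuousMul R] (hJ : IsClosed J) :
    IsClosed (idealizer J) := by
  have : idealizer J = ⋂ j ∈ J, ((· * j) ⁻¹' J ∩ (j * ·) ⁻¹' J) := by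
    ext a
    simp only [idealizer, Set.mem_ofPred_eq, Set.mem_iInter, Set.mem_inter_iff, Set.mem_preimage]
  rw [this]
  exact isClosed_biInter fun j _ =>
    (hJ.preimage (continuous_mul_const j)).inter (hJ.preimage (continuous_const_mul j))

theorem zero_mem_idealizer (h0 : (0 : R) ∈ J) : (0 : R) ∈ idealizer J :=
  fun j _ => by simpa using h0

theorem add_mem_idealizer (hadd : ∀ a ∈ J, ∀ b ∈ J, a + b ∈ J) {a b : R}
    (ha : a ∈ idealizer J) (hb : b ∈ idealizer J) : a + b ∈ idealizer J := fun j hj =>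
  ⟨by rw [add_mul]; exact hadd _ (ha j hj).1 _ (hb j hj).1,
    by rw [mul_add]; exact hadd _ (ha j hj).2 _ (hb j hj).2⟩

theorem smul_mem_idealizer {𝕜 : Type*} [SMul 𝕜 R] [IsScalarTower 𝕜 R R] [SMulCommClass 𝕜 R R]
    (hsmul : ∀ (c : 𝕜), ∀ a ∈ J, c • a ∈ J) (c : 𝕜) {a : R} (ha : a ∈ idealizer J) :
    c • a ∈ idealizer J := fun j hj =>
  ⟨by rw [smul_mul_assoc]; exact hsmul c _ (ha j hj).1,
    by rw [mul_smul_comm]; exact hsmul c _ (ha j hj).2⟩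

theorem mul_mem_idealizer {a b : R} (ha : a ∈ idealizer J) (hb : b ∈ idealizer J) :
    a * b ∈ idealizer J := fun j hj =>
  ⟨by rw [mul_assoc]; exact (ha _ (hb j hj).1).1,
    by rw [← mul_assoc]; exact (hb _ (ha j hj).2).2⟩

theorem star_mem_idealizer [StarRing R] (hstar : ∀ j ∈ J, star j ∈ J) {a : R}
    (ha : a ∈ idealizer J) : star a ∈ idealizer J := fun j hj =>
  ⟨by simpa only [star_mul, star_star] using hstar _ (ha _ (hstar j hj)).2,
    by simpa only [star_mul, star_star] using hstar _ (ha _ (hstar j hj)).1⟩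

end Idealizer

section CstarSet

variable {H : Type} [NormedAddCommGroup H] [InnerProductSpace ℂ H] [CompleteSpace H]

theorem subset_cstarSet (A : Set (H →L[ℂ] H)) : A ⊆ CstarSet A :=
  fun _ ha _ hS => hS.1 ha

theorem cstarSet_subset {A S : Set (H →L[ℂ] H)} (hAS : A ⊆ S) (hS : IsClosed S)
    (h0 : (0 : H →L[ℂ] H) ∈ S) (hadd : ∀ a ∈ S, ∀ b ∈ S, a + b ∈ S)
    (hsmul : ∀ (c : ℂ), ∀ a ∈ S, c • a ∈ S) (hmul : ∀ a ∈ S, ∀ b ∈ S, a * b ∈ S)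
    (hstar : ∀ a ∈ S, star a ∈ S) : CstarSet A ⊆ S :=
  Set.sInter_subset_of_mem ⟨hAS, hS, h0, hadd, hsmul, hmul, hstar⟩

end CstarSet

theorem selfadjoint_ideal_is_ideal_of_cstar_envelope_general
    {H : Type} [NormedAddCommGroup H] [InnerProductSpace ℂ H] [CompleteSpace H]
    (A J : Set (H →L[ℂ] H)) (hJ : IsClosedIdealIn J A)
    (hstar : ∀ j ∈ J, star j ∈ J) :
    IsClosedIdealIn J (CstarSet A) := by
  obtain ⟨hJA, hJcl, hJ0, hJadd, hJsmul, hJmul⟩ := hJ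
  have hC : CstarSet A ⊆ idealizer J :=
    cstarSet_subset hJmul (isClosed_idealizer hJcl) (zero_mem_idealizer hJ0)
      (fun _ ha _ hb => add_mem_idealizer hJadd ha hb) (fun c _ ha => smul_mem_idealizer hJsmul c ha)
      (fun _ ha _ hb => mul_mem_idealizer ha hb) (fun _ ha => star_mem_idealizer hstar ha)
  exact ⟨hJA.trans (subset_cstarSet A), hJcl, hJ0, hJadd, hJsmul, hC⟩

theorem selfadjoint_ideal_is_ideal_of_cstar_envelope
    {H : Type} [NormedAddCommGroup H] [InnerProductSpace ℂ H] [CompleteSpace H]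
    (A J : Set (H →L[ℂ] H)) (hA : IsOpAlg A) (hJ : IsClosedIdealIn J A)
    (hstar : ∀ j ∈ J, star j ∈ J) :
    IsClosedIdealIn J (CstarSet A) :=
  selfadjoint_ideal_is_ideal_of_cstar_envelope_general A J hJ hstar

end
end
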